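/- Let α > 0, let G be the Green's function of the Robin problem, fix x₀ ∈ [−π,π], and let G^#(x₀,·) denote the symmetric decreasing rearrangement of the function y ↦ G(x₀,y) on [−π,π]. Then G^#(x₀,y) ≤ G(0,y) for all y ∈ [−π,π]; moreover, equality holds for all y ∈ [−π,π] if and only if it holds for some y ∈ [−π,π], if and only if x₀ = 0. -/

import Mathlib

open MeasureTheory Real Set
open scoped ENNReal

/-- The constant `c_α = α/(1+απ)`. -/
noncomputable def cA (α : ℝ) : ℝ := α / (1 + α * π)

/-- The Green's function of the Robin problem on `[-π, π]`. -/
noncomputable def robinGreen (α x y : ℝ) : ℝ :=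
  -(1/2) * cA α * x * y - (1/2) * |x - y| + 1 / (2 * cA α)

/-- The solution of the Robin problem with heat source `f`. -/
noncomputable def robinSol (α : ℝ) (f : ℝ → ℝ) (x : ℝ) : ℝ :=
  ∫ y in (-π)..π, robinGreen α x y * f y

/-- The decreasing rearrangement `f^*` of a function `f : [-π,π] → ℝ`:
`f^*(0)` is the essential supremum, `f^*(t)` for `t ∈ (0, 2π)` is
`inf { s | λ({x ∈ [-π,π] : f x > s}) ≤ t }`, and `f^*(2π)` is the essential infimum. -/
noncomputable def decRearr (f : ℝ → ℝ) (t : ℝ) : ℝ :=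
  if t ≤ 0 then essSup f (volume.restrict (Icc (-π) π))
  else if t < 2 * π then
    sInf {s : ℝ | volume {x ∈ Icc (-π) π | s < f x} ≤ ENNReal.ofReal t}
  else essInf f (volume.restrict (Icc (-π) π))

/-- The symmetric decreasing rearrangement `f^#(t) = f^*(2|t|)` of `f : [-π,π] → ℝ`. -/
noncomputable def sdr (f : ℝ → ℝ) (t : ℝ) : ℝ := decRearr f (2 * |t|)

/-!
For `x₀ ∈ [-π, π]`, `y ↦ G(x₀, y)` is a tent: it peaks at `y = x₀` with value
`G(x₀, x₀) = G(0, 0) - c x₀² / 2` and falls off with slopes `(1 - c x₀)/2` to the left and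
`(1 + c x₀)/2` to the right, both positive because `c π < 1`. Its superlevel set at height
`G(x₀, x₀) - t (1 - c² x₀²) / 4` is therefore an interval of length `t`, which gives
`G^#(x₀, y) ≤ G(0, y) - (c x₀² / 2)(1 - c |y|)`; at `|y| = π`, where `G^#` is an essential
infimum, the same bound comes from the value of `G(x₀, ·)` at the endpoint on the far side of
`x₀`. The gap is positive unless `x₀ = 0`, and `G(0, y) = G(0, 0) - |y| / 2` is already
symmetric decreasing, so it equals its own rearrangement.
-/

open Filter

section Rearrangement

variable {f : ℝ → ℝ} {a b t r s : ℝ}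

lemma ae_volume_restrict_Icc_neBot (hab : a < b) : (ae (volume.restrict (Icc a b))).NeBot :=
  ae_neBot.mpr <| by simp [Measure.restrict_eq_zero, hab]

lemma volume_restrict_Icc_setOf (p : ℝ → Prop) :
    volume.restrict (Icc a b) {x | p x} = volume {x ∈ Icc a b | p x} := by
  rw [Measure.restrict_apply' measurableSet_Icc, ofPred_inter_eq_sep]

lemma frequently_ae_restrict_Icc_mem_of_isOpen {U : Set ℝ} (hU : IsOpen U) (hab : a < b)
    {x : ℝ} (hx : x ∈ Icc a b) (hxU : x ∈ U) : ∃ᵐ y ∂volume.restrict (Icc a b), y ∈ U := by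
  rw [frequently_ae_iff, Measure.restrict_apply' measurableSet_Icc, ofPred_mem_eq]
  have hne : (U ∩ Ioo a b).Nonempty :=
    mem_closure_iff.mp (closure_Ioo hab.ne ▸ hx) U hU hxU
  exact ((hU.inter isOpen_Ioo).measure_pos volume hne |>.trans_le
    (measure_mono (inter_subset_inter_right U Ioo_subset_Icc_self))).ne'

lemma decRearr_le_of_volume_le (hf : BddBelow (f '' Icc (-π) π)) (ht₀ : 0 ≤ t) (ht : t < 2 * π)
    (hs : volume {x ∈ Icc (-π) π | s < f x} ≤ ENNReal.ofReal t) : decRearr f t ≤ s := by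
  obtain ⟨m, hm⟩ := hf
  rcases ht₀.eq_or_lt with rfl | ht₀
  · have := ae_volume_restrict_Icc_neBot (neg_lt_self pi_pos)
    rw [decRearr, if_pos le_rfl]
    refine essSup_le_of_ae_le s ?_ (isCoboundedUnder_le_of_eventually_le _
      (ae_restrict_of_forall_mem measurableSet_Icc fun x hx => hm (mem_image_of_mem f hx)))
    rw [EventuallyLE, ae_iff]
    simp only [not_le]
    rw [volume_restrict_Icc_setOf fun x => s < f x]
    exact nonpos_iff_eq_zero.mp (ENNReal.ofReal_zero ▸ hs)
  · rw [decRearr, if_neg ht₀.not_ge, if_pos ht]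
    refine csInf_le ⟨m, fun s' (hs' : volume {x ∈ Icc (-π) π | s' < f x} ≤ _) => ?_⟩ hs
    by_contra! hs'm
    have hall : {x ∈ Icc (-π) π | s' < f x} = Icc (-π) π :=
      sep_eq_self_iff_mem_true.mpr fun x hx => hs'm.trans_le (hm (mem_image_of_mem f hx))
    rw [hall, Real.volume_Icc, ENNReal.ofReal_le_ofReal_iff ht₀.le] at hs'
    linarith

lemma le_decRearr_of_lt_volume (hf : BddAbove (f '' Icc (-π) π)) (ht₀ : 0 ≤ t) (ht : t < 2 * π)
    (hr : ∀ s < r, ENNReal.ofReal t < volume {x ∈ Icc (-π) π | s < f x}) :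
    r ≤ decRearr f t := by
  rcases ht₀.eq_or_lt with rfl | ht₀
  · rw [decRearr, if_pos le_rfl]
    refine le_of_forall_lt_imp_le_of_dense fun s hs => le_limsup_of_frequently_le ?_
      (isBoundedUnder_iff_eventually_bddAbove.mpr ⟨_, hf, ae_restrict_mem measurableSet_Icc⟩)
    rw [frequently_ae_iff, volume_restrict_Icc_setOf fun x => s ≤ f x]
    have hsub : {x ∈ Icc (-π) π | s < f x} ⊆ {x ∈ Icc (-π) π | s ≤ f x} :=
      fun x hx => ⟨hx.1, hx.2.le⟩
    exact (zero_le.trans_lt (hr s hs) |>.trans_le (measure_mono hsub)).ne'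
  · rw [decRearr, if_neg ht₀.not_ge, if_pos ht]
    obtain ⟨M, hM⟩ := hf
    have hempty : {x ∈ Icc (-π) π | M < f x} = ∅ :=
      sep_eq_empty_iff_mem_false.mpr fun x hx => (hM (mem_image_of_mem f hx)).not_gt
    have hM_mem : volume {x ∈ Icc (-π) π | M < f x} ≤ ENNReal.ofReal t := by
      rw [hempty, measure_empty]
      exact zero_le
    refine le_csInf ⟨M, hM_mem⟩ fun s hs => ?_
    by_contra! hsr
    exact (hr s hsr).not_ge hs

lemma decRearr_le_apply (hf : Continuous f) (ht : 2 * π ≤ t) (ha : a ∈ Icc (-π) π) :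
    decRearr f t ≤ f a := by
  rw [decRearr, if_neg (by linarith [pi_pos]), if_neg ht.not_gt]
  refine le_of_forall_gt_imp_ge_of_dense fun b hb => liminf_le_of_frequently_le ?_
    (isBoundedUnder_iff_eventually_bddBelow.mpr
      ⟨_, isCompact_Icc.bddBelow_image hf.continuousOn, ae_restrict_mem measurableSet_Icc⟩)
  exact (frequently_ae_restrict_Icc_mem_of_isOpen (isOpen_lt hf continuous_const)
    (neg_lt_self pi_pos) ha hb).mono fun _ hx => hx.le

lemma le_decRearr_of_forall_le (hf : BddAbove (f '' Icc (-π) π)) (ht : 2 * π ≤ t)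
    (hr : ∀ x ∈ Icc (-π) π, r ≤ f x) : r ≤ decRearr f t := by
  have := ae_volume_restrict_Icc_neBot (neg_lt_self pi_pos)
  obtain ⟨M, hM⟩ := hf
  rw [decRearr, if_neg (by linarith [pi_pos]), if_neg ht.not_gt]
  exact le_essInf_of_ae_le r (ae_restrict_of_forall_mem measurableSet_Icc hr)
    (isCoboundedUnder_ge_of_eventually_le _
      (ae_restrict_of_forall_mem measurableSet_Icc fun x hx => hM (mem_image_of_mem f hx)))

end Rearrangement

section Robin

variable {α x₀ y : ℝ}

lemma cA_nonneg (hα : 0 ≤ α) : 0 ≤ cA α := div_nonneg hα (by positivity)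

lemma cA_pos (hα : 0 < α) : 0 < cA α := div_pos hα (by positivity)

lemma cA_mul_pi_lt_one (hα : 0 ≤ α) : cA α * π < 1 := by
  rw [cA, div_mul_eq_mul_div, div_lt_one (by positivity)]
  linarith

lemma cA_mul_abs_lt_one (hα : 0 ≤ α) (hx : x₀ ∈ Icc (-π) π) : cA α * |x₀| < 1 :=
  (mul_le_mul_of_nonneg_left (abs_le.mpr hx) (cA_nonneg hα)).trans_lt (cA_mul_pi_lt_one hα)

lemma continuous_robinGreen (α x : ℝ) : Continuous (robinGreen α x) := by
  unfold robinGreen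
  fun_prop

lemma robinGreen_zero_left (α y : ℝ) : robinGreen α 0 y = 1 / (2 * cA α) - |y| / 2 := by
  simp only [robinGreen, mul_zero, zero_mul, zero_sub, abs_neg]
  ring

lemma volume_superlevel_robinGreen_le (hα : 0 ≤ α) (hx₀ : x₀ ∈ Icc (-π) π) (t : ℝ) :
    volume {y ∈ Icc (-π) π |
      robinGreen α x₀ x₀ - t * (1 - (cA α * x₀) ^ 2) / 4 < robinGreen α x₀ y} ≤
      ENNReal.ofReal t := by
  obtain ⟨hl, hr⟩ := abs_lt.mp <| show |cA α * x₀| < 1 by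
    rw [abs_mul, abs_of_nonneg (cA_nonneg hα)]; exact cA_mul_abs_lt_one hα hx₀
  have hsub : {y ∈ Icc (-π) π |
      robinGreen α x₀ x₀ - t * (1 - (cA α * x₀) ^ 2) / 4 < robinGreen α x₀ y} ⊆
      Ioo (x₀ - t * (1 + cA α * x₀) / 2) (x₀ + t * (1 - cA α * x₀) / 2) := by
    rintro y ⟨-, hy⟩
    simp only [robinGreen, sub_self, abs_zero] at hy
    rcases le_total y x₀ with h | h
    · rw [abs_of_nonneg (sub_nonneg.2 h)] at hy
      constructor <;> nlinarith
    · rw [abs_of_nonpos (sub_nonpos.2 h)] at hy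
      constructor <;> nlinarith
  calc _ ≤ volume (Ioo (x₀ - t * (1 + cA α * x₀) / 2) (x₀ + t * (1 - cA α * x₀) / 2)) :=
        measure_mono hsub
    _ = ENNReal.ofReal t := by rw [Real.volume_Ioo]; ring_nf

lemma sdr_robinGreen_le (hα : 0 ≤ α) (hx₀ : x₀ ∈ Icc (-π) π) (hy : y ∈ Icc (-π) π) :
    sdr (robinGreen α x₀) y ≤ robinGreen α 0 y - cA α * x₀ ^ 2 / 2 * (1 - cA α * |y|) := by
  have hf := continuous_robinGreen α x₀
  rcases (abs_le.mpr hy).lt_or_eq with hy' | hy'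
  · calc sdr (robinGreen α x₀) y
        ≤ robinGreen α x₀ x₀ - 2 * |y| * (1 - (cA α * x₀) ^ 2) / 4 :=
          decRearr_le_of_volume_le (isCompact_Icc.bddBelow_image hf.continuousOn) (by positivity)
            (by linarith) (volume_superlevel_robinGreen_le hα hx₀ _)
      _ = _ := by
          rw [robinGreen_zero_left]
          simp only [robinGreen, sub_self, abs_zero]
          ring
  · obtain ⟨a, ha, hGa⟩ : ∃ a ∈ Icc (-π) π,
        robinGreen α x₀ a = 1 / (2 * cA α) - π / 2 - |x₀| * (1 - cA α * π) / 2 := by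
      rcases le_total 0 x₀ with h | h
      · refine ⟨-π, left_mem_Icc.mpr (by linarith [pi_pos]), ?_⟩
        rw [robinGreen, abs_of_nonneg h, abs_of_nonneg (by linarith [hx₀.1])]
        ring
      · refine ⟨π, right_mem_Icc.mpr (by linarith [pi_pos]), ?_⟩
        rw [robinGreen, abs_of_nonpos h, abs_of_nonpos (by linarith [hx₀.2])]
        ring
    have hcx : cA α * x₀ ^ 2 ≤ |x₀| := by
      have := cA_mul_abs_lt_one hα hx₀
      rw [← sq_abs]
      nlinarith [abs_nonneg x₀]
    calc sdr (robinGreen α x₀) y ≤ robinGreen α x₀ a := decRearr_le_apply hf (by rw [hy']) ha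
      _ ≤ _ := by
          rw [hGa, robinGreen_zero_left, hy']
          nlinarith [mul_le_mul_of_nonneg_right hcx (sub_nonneg.2 (cA_mul_pi_lt_one hα).le)]

lemma ofReal_lt_volume_superlevel_robinGreen_zero {s : ℝ} (hy : |y| < π)
    (hs : s < robinGreen α 0 y) :
    ENNReal.ofReal (2 * |y|) < volume {z ∈ Icc (-π) π | s < robinGreen α 0 z} := by
  rw [robinGreen_zero_left] at hs
  set ρ := min (2 * (1 / (2 * cA α) - s)) π
  have hρ : |y| < ρ := lt_min (by linarith) hy
  have hsub : Ioo (-ρ) ρ ⊆ {z ∈ Icc (-π) π | s < robinGreen α 0 z} := by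
    intro z hz
    have hz' : |z| < ρ := abs_lt.mpr hz
    have hρπ : ρ ≤ π := min_le_right _ _
    refine ⟨⟨by linarith [hz.1], by linarith [hz.2]⟩, ?_⟩
    rw [robinGreen_zero_left]
    linarith [min_le_left (2 * (1 / (2 * cA α) - s)) π]
  calc ENNReal.ofReal (2 * |y|) < volume (Ioo (-ρ) ρ) := by
        rw [Real.volume_Ioo, ENNReal.ofReal_lt_ofReal_iff (by linarith [abs_nonneg y])]
        linarith
    _ ≤ _ := measure_mono hsub

lemma robinGreen_zero_le_sdr (hy : y ∈ Icc (-π) π) :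
    robinGreen α 0 y ≤ sdr (robinGreen α 0) y := by
  have hf : BddAbove (robinGreen α 0 '' Icc (-π) π) :=
    isCompact_Icc.bddAbove_image (continuous_robinGreen α 0).continuousOn
  rcases (abs_le.mpr hy).lt_or_eq with hy' | hy'
  · exact le_decRearr_of_lt_volume hf (by positivity) (by linarith)
      fun s hs => ofReal_lt_volume_superlevel_robinGreen_zero hy' hs
  · refine le_decRearr_of_forall_le hf (by rw [hy']) fun z hz => ?_
    rw [robinGreen_zero_left, robinGreen_zero_left, hy']
    linarith [abs_le.mpr hz]

end Robin

/-- **Comparison of the s.d.r. of the Green's function with `G(0,·)`.** -/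
theorem sdr_green_le
    (α : ℝ) (hα : 0 < α) (x₀ : ℝ) (hx₀ : x₀ ∈ Icc (-π) π) :
    (∀ y ∈ Icc (-π) π, sdr (fun y => robinGreen α x₀ y) y ≤ robinGreen α 0 y) ∧
    ((∀ y ∈ Icc (-π) π, sdr (fun y => robinGreen α x₀ y) y = robinGreen α 0 y) ↔
      (∃ y ∈ Icc (-π) π, sdr (fun y => robinGreen α x₀ y) y = robinGreen α 0 y)) ∧
    ((∃ y ∈ Icc (-π) π, sdr (fun y => robinGreen α x₀ y) y = robinGreen α 0 y) ↔ x₀ = 0) := by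
  have hc := cA_pos hα
  have hgap y (hy : y ∈ Icc (-π) π) : 0 < 1 - cA α * |y| :=
    sub_pos.2 (cA_mul_abs_lt_one hα.le hy)
  have hle y (hy : y ∈ Icc (-π) π) : sdr (robinGreen α x₀) y ≤ robinGreen α 0 y :=
    (sdr_robinGreen_le hα.le hx₀ hy).trans
      (sub_le_self _ (mul_nonneg (by positivity) (hgap y hy).le))
  have hzero y (hy : y ∈ Icc (-π) π) (heq : sdr (robinGreen α x₀) y = robinGreen α 0 y) :
      x₀ = 0 := by
    by_contra hx
    have hcorr : 0 < cA α * x₀ ^ 2 / 2 * (1 - cA α * |y|) :=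
      mul_pos (by positivity) (hgap y hy)
    linarith [sdr_robinGreen_le hα.le hx₀ hy]
  have heq (hx : x₀ = 0) y (hy : y ∈ Icc (-π) π) :
      sdr (robinGreen α x₀) y = robinGreen α 0 y :=
    (hle y hy).antisymm (by subst hx; exact robinGreen_zero_le_sdr hy)
  have h0 : (0 : ℝ) ∈ Icc (-π) π := ⟨by linarith [pi_pos], pi_pos.le⟩
  refine ⟨hle, ⟨fun h => ⟨0, h0, h 0 h0⟩, fun ⟨y, hy, h⟩ => heq (hzero y hy h)⟩,
    ⟨fun ⟨y, hy, h⟩ => hzero y hy h, fun hx => ⟨0, h0, heq hx 0 h0⟩⟩⟩
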